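/- Convergence of PGD to a critical point: choose z⁽⁰⁾ with ‖x − D z⁽⁰⁾‖₂ ≤ 1, set S = supp(z⁽⁰⁾), and let τ > 1 and s > max{2|S|, 2(1+λ|S|)/(λτ)}. If D_S has full column rank with σ_min(D_S) > 0, then the PGD sequence {z⁽ᵗ⁾}_t converges to some ẑ ∈ ℝⁿ satisfying (Dᵀ(Dẑ − x))_j = 0 for every j ∈ supp(ẑ), i.e., ẑ is a critical point of L (the gradient of the squared-loss part of L vanishes on the support of ẑ). -/

import Mathlib

open scoped BigOperators

noncomputable def l2norm {m : ℕ} (v : Fin m → ℝ) : ℝ := Real.sqrt (∑ i, (v i)^2)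

noncomputable def supp {n : ℕ} (z : Fin n → ℝ) : Finset (Fin n) := Finset.univ.filter (fun j => z j ≠ 0)

noncomputable def l0norm {n : ℕ} (z : Fin n → ℝ) : ℕ := (supp z).card

noncomputable def hardThresh {n : ℕ} (θ : ℝ) (u : Fin n → ℝ) : Fin n → ℝ :=
  fun j => if |u j| < θ then 0 else u j

noncomputable def Lobj {d n : ℕ} (D : Matrix (Fin d) (Fin n) ℝ) (x : Fin d → ℝ) (lam : ℝ)
    (z : Fin n → ℝ) : ℝ := (l2norm (x - D.mulVec z))^2 + lam * (l0norm z : ℝ)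

noncomputable def pgdSeq {d n : ℕ} (D : Matrix (Fin d) (Fin n) ℝ) (x : Fin d → ℝ)
    (lam τ s : ℝ) (z0 : Fin n → ℝ) : ℕ → (Fin n → ℝ)
  | 0 => z0
  | (t+1) =>
      hardThresh (Real.sqrt (2*lam/(τ*s)))
        (fun j => pgdSeq D x lam τ s z0 t j
          - (2/(τ*s)) * (D.transpose.mulVec (D.mulVec (pgdSeq D x lam τ s z0 t) - x)) j)

noncomputable def sigmaMinCols {d n : ℕ} (D : Matrix (Fin d) (Fin n) ℝ) (S : Finset (Fin n)) : ℝ :=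
  sInf {t | ∃ y : Fin n → ℝ, (∀ j ∉ S, y j = 0) ∧ l2norm y = 1 ∧ t = l2norm (D.mulVec y)}

noncomputable def sigmaMaxCols {d n : ℕ} (D : Matrix (Fin d) (Fin n) ℝ) (S : Finset (Fin n)) : ℝ :=
  sSup {t | ∃ y : Fin n → ℝ, (∀ j ∉ S, y j = 0) ∧ l2norm y = 1 ∧ t = l2norm (D.mulVec y)}

noncomputable def sigmaMax {d n : ℕ} (D : Matrix (Fin d) (Fin n) ℝ) : ℝ :=
  sSup {t | ∃ y : Fin n → ℝ, l2norm y = 1 ∧ t = l2norm (D.mulVec y)}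

def admissibleSubgrad {n : ℕ} (lam b : ℝ) (z r : Fin n → ℝ) : Prop :=
  (∀ j, z j ≠ 0 → r j = 0) ∧ (∀ j, z j = 0 → -(lam/b) ≤ r j ∧ r j ≤ lam/b)

noncomputable def frobNorm {a b : ℕ} (M : Matrix (Fin a) (Fin b) ℝ) : ℝ :=
  Real.sqrt (∑ i, ∑ j, (M i j)^2)

/-!
A PGD step with step size `η = 2 / (τ * s)` and threshold `θ = √(λη)` minimises `θ² ‖·‖₀` plus the
squared distance to the gradient step; comparing with the previous iterate shows that `L` drops
by at least `(1 / η - |S|) ‖z⁽ᵗ⁺¹⁾ - z⁽ᵗ⁾‖²` as long as the iterates stay supported in `S`. They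
do, because `L(z⁽ᵗ⁾) ≤ L(z⁽⁰⁾) < λ / η` keeps the gradient step below the threshold off `S`.
Hence the steps tend to `0`; as nonzero entries of the iterates are at least `θ` in absolute
value, the support freezes at some `T ⊆ S`, after which PGD is gradient descent on the columns
`T`, a contraction with factor `1 - η σ_min(D_S)²`. So the iterates converge, and passing to the
limit in the update on `supp ẑ` shows that the gradient vanishes there.
-/

open Matrix Filter Topology

section SqNorm

variable {ι : Type*} [Fintype ι]

def sqNorm (v : ι → ℝ) : ℝ := ∑ i, v i ^ 2

lemma sqNorm_nonneg (v : ι → ℝ) : 0 ≤ sqNorm v :=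
  Finset.sum_nonneg fun _ _ => sq_nonneg _

lemma sq_le_sqNorm (v : ι → ℝ) (i : ι) : v i ^ 2 ≤ sqNorm v :=
  Finset.single_le_sum (fun i _ => sq_nonneg (v i)) (Finset.mem_univ i)

lemma dotProduct_self_eq_sqNorm (v : ι → ℝ) : v ⬝ᵥ v = sqNorm v := by
  simp [dotProduct, sqNorm, sq]

lemma sqNorm_sub_comm (v w : ι → ℝ) : sqNorm (v - w) = sqNorm (w - v) := by
  simp only [← dotProduct_self_eq_sqNorm, sub_dotProduct, dotProduct_sub, dotProduct_comm v w]
  ring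

lemma sqNorm_smul (c : ℝ) (v : ι → ℝ) : sqNorm (c • v) = c ^ 2 * sqNorm v := by
  simp only [← dotProduct_self_eq_sqNorm, smul_dotProduct, dotProduct_smul, smul_eq_mul]
  ring

lemma sqNorm_add_smul (v w : ι → ℝ) (c : ℝ) :
    sqNorm (v + c • w) = sqNorm v + 2 * c * (w ⬝ᵥ v) + c ^ 2 * sqNorm w := by
  simp only [← dotProduct_self_eq_sqNorm, add_dotProduct, dotProduct_add, smul_dotProduct,
    dotProduct_smul, smul_eq_mul, dotProduct_comm v w]
  ring

lemma sqNorm_eq_sum_of_eq_zero {S : Finset ι} {v : ι → ℝ} (hv : ∀ i ∉ S, v i = 0) :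
    sqNorm v = ∑ i ∈ S, v i ^ 2 :=
  (Finset.sum_subset S.subset_univ fun i _ hi => by rw [hv i hi, sq, mul_zero]).symm

end SqNorm

lemma l2norm_eq_sqrt_sqNorm {m : ℕ} (v : Fin m → ℝ) : l2norm v = √(sqNorm v) := rfl

lemma l2norm_nonneg {m : ℕ} (v : Fin m → ℝ) : 0 ≤ l2norm v := Real.sqrt_nonneg _

lemma l2norm_sq {m : ℕ} (v : Fin m → ℝ) : l2norm v ^ 2 = sqNorm v :=
  Real.sq_sqrt (sqNorm_nonneg v)

lemma abs_le_l2norm {m : ℕ} (v : Fin m → ℝ) (i : Fin m) : |v i| ≤ l2norm v :=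
  Real.abs_le_sqrt (sq_le_sqNorm v i)

lemma l2norm_smul {m : ℕ} (c : ℝ) (v : Fin m → ℝ) : l2norm (c • v) = |c| * l2norm v := by
  rw [l2norm_eq_sqrt_sqNorm, sqNorm_smul, Real.sqrt_mul (sq_nonneg c), Real.sqrt_sq_eq_abs]
  rfl

lemma sqNorm_le_one_of_l2norm_le_one {m : ℕ} {v : Fin m → ℝ} (h : l2norm v ≤ 1) :
    sqNorm v ≤ 1 := by
  rw [← l2norm_sq]
  exact pow_le_one₀ (l2norm_nonneg v) h

lemma tendsto_zero_of_add_mul_le_self {a b : ℕ → ℝ} {c : ℝ} (hc : 0 < c) (ha : ∀ t, 0 ≤ a t)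
    (hb : ∀ t, 0 ≤ b t) (h : ∀ t, a (t + 1) + c * b t ≤ a t) : Tendsto b atTop (𝓝 0) := by
  have hsum : ∀ T, ∑ t ∈ Finset.range T, c * b t + a T ≤ a 0 := by
    intro T
    induction T with
    | zero => simp
    | succ T ih => rw [Finset.sum_range_succ]; linarith [h T]
  have hcb : Tendsto (fun t => c * b t) atTop (𝓝 0) :=
    (summable_of_sum_range_le (fun t => mul_nonneg hc.le (hb t)) (c := a 0) fun T => by
      linarith [hsum T, ha T]).tendsto_atTop_zero
  simpa [hc.ne'] using hcb.const_mul c⁻¹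

lemma cauchySeq_of_sqNorm_sub_le {n : ℕ} {z : ℕ → Fin n → ℝ} {q : ℝ} (hq : q < 1)
    (h : ∀ᶠ t in atTop, sqNorm (z (t + 2) - z (t + 1)) ≤ q * sqNorm (z (t + 1) - z t)) :
    CauchySeq z := by
  set a : ℕ → ℝ := fun t => l2norm (z (t + 1) - z t)
  have hratio : ∀ᶠ t in atTop, ‖a (t + 1)‖ ≤ √q * ‖a t‖ := by
    filter_upwards [h] with t ht
    rw [Real.norm_of_nonneg (l2norm_nonneg _), Real.norm_of_nonneg (l2norm_nonneg _),
      l2norm_eq_sqrt_sqNorm, l2norm_eq_sqrt_sqNorm, ← Real.sqrt_mul' q (sqNorm_nonneg _)]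
    exact Real.sqrt_le_sqrt ht
  have hsum : Summable a :=
    summable_of_ratio_norm_eventually_le ((Real.sqrt_lt' one_pos).2 (by simpa using hq)) hratio
  refine cauchySeq_of_summable_dist (hsum.of_nonneg_of_le (fun _ => dist_nonneg) fun t => ?_)
  refine (dist_pi_le_iff (l2norm_nonneg _)).2 fun j => ?_
  rw [Real.dist_eq, abs_sub_comm]
  exact abs_le_l2norm (z (t + 1) - z t) j

section Dictionary

variable {d n : ℕ} (D : Matrix (Fin d) (Fin n) ℝ)

lemma sq_transpose_mulVec_apply_le (hD : ∀ j, l2norm (fun i => D i j) ≤ 1)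
    (w : Fin d → ℝ) (j : Fin n) : (Dᵀ *ᵥ w) j ^ 2 ≤ sqNorm w :=
  calc (Dᵀ *ᵥ w) j ^ 2 = (∑ i, D i j * w i) ^ 2 := by simp [mulVec, dotProduct]
    _ ≤ (∑ i, D i j ^ 2) * ∑ i, w i ^ 2 := Finset.sum_mul_sq_le_sq_mul_sq _ _ _
    _ ≤ 1 * sqNorm w :=
      mul_le_mul_of_nonneg_right (sqNorm_le_one_of_l2norm_le_one (hD j)) (sqNorm_nonneg w)
    _ = sqNorm w := one_mul _

lemma sqNorm_mulVec_le_card_mul (hD : ∀ j, l2norm (fun i => D i j) ≤ 1)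
    {S : Finset (Fin n)} {v : Fin n → ℝ} (hv : ∀ j ∉ S, v j = 0) :
    sqNorm (D *ᵥ v) ≤ S.card * sqNorm v := by
  have hrow : ∀ i, (D *ᵥ v) i ^ 2 ≤ (∑ j ∈ S, D i j ^ 2) * sqNorm v := fun i =>
    calc (D *ᵥ v) i ^ 2 = (∑ j ∈ S, D i j * v j) ^ 2 := by
          rw [Finset.sum_subset S.subset_univ fun j _ hj => by rw [hv j hj, mul_zero]]
          simp [mulVec, dotProduct]
      _ ≤ (∑ j ∈ S, D i j ^ 2) * ∑ j ∈ S, v j ^ 2 := Finset.sum_mul_sq_le_sq_mul_sq _ _ _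
      _ = (∑ j ∈ S, D i j ^ 2) * sqNorm v := by rw [sqNorm_eq_sum_of_eq_zero hv]
  calc sqNorm (D *ᵥ v) ≤ ∑ i, (∑ j ∈ S, D i j ^ 2) * sqNorm v := Finset.sum_le_sum fun i _ => hrow i
    _ = (∑ j ∈ S, sqNorm fun i => D i j) * sqNorm v := by
      rw [← Finset.sum_mul, Finset.sum_comm]; rfl
    _ ≤ (∑ _j ∈ S, (1 : ℝ)) * sqNorm v := by
      gcongr with j
      · exact sqNorm_nonneg v
      · exact sqNorm_le_one_of_l2norm_le_one (hD j)
    _ = S.card * sqNorm v := by simp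

lemma sqNorm_sub_mulVec_add (x : Fin d → ℝ) (z δ : Fin n → ℝ) :
    sqNorm (x - D *ᵥ (z + δ)) =
      sqNorm (x - D *ᵥ z) + 2 * ((Dᵀ *ᵥ (D *ᵥ z - x)) ⬝ᵥ δ) + sqNorm (D *ᵥ δ) := by
  simp only [← dotProduct_self_eq_sqNorm, mulVec_add, mulVec_transpose, ← dotProduct_mulVec,
    sub_dotProduct, dotProduct_sub, add_dotProduct, dotProduct_add, dotProduct_comm x (D *ᵥ δ),
    dotProduct_comm (D *ᵥ z) (D *ᵥ δ)]
  ring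

lemma transpose_mulVec_mulVec_sub_sub (x : Fin d → ℝ) (z z' : Fin n → ℝ) :
    Dᵀ *ᵥ (D *ᵥ z' - x) - Dᵀ *ᵥ (D *ᵥ z - x) = Dᵀ *ᵥ (D *ᵥ (z' - z)) := by
  simp only [mulVec_sub]
  abel

lemma sigmaMinCols_nonneg (S : Finset (Fin n)) : 0 ≤ sigmaMinCols D S :=
  Real.sInf_nonneg <| by
    rintro _ ⟨y, -, -, rfl⟩
    exact Real.sqrt_nonneg _

lemma sigmaMinCols_mul_l2norm_le {S : Finset (Fin n)} {v : Fin n → ℝ} (hv : ∀ j ∉ S, v j = 0) :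
    sigmaMinCols D S * l2norm v ≤ l2norm (D *ᵥ v) := by
  rcases (l2norm_nonneg v).eq_or_lt with hv0 | hvpos
  · rw [← hv0, mul_zero]
    exact Real.sqrt_nonneg _
  set c := (l2norm v)⁻¹
  have hunit : l2norm (c • v) = 1 := by
    rw [l2norm_smul, abs_of_pos (inv_pos.2 hvpos), inv_mul_cancel₀ hvpos.ne']
  have hle : sigmaMinCols D S ≤ l2norm (D *ᵥ (c • v)) :=
    csInf_le ⟨0, by rintro _ ⟨y, -, -, rfl⟩; exact Real.sqrt_nonneg _⟩
      ⟨c • v, fun j hj => by simp [hv j hj], hunit, rfl⟩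
  rw [mulVec_smul, l2norm_smul, abs_of_pos (inv_pos.2 hvpos), inv_mul_eq_div,
    le_div_iff₀ hvpos] at hle
  exact hle

lemma sigmaMinCols_sq_mul_sqNorm_le {S : Finset (Fin n)} {v : Fin n → ℝ}
    (hv : ∀ j ∉ S, v j = 0) : sigmaMinCols D S ^ 2 * sqNorm v ≤ sqNorm (D *ᵥ v) := by
  rw [← l2norm_sq, ← l2norm_sq, ← mul_pow]
  exact pow_le_pow_left₀ (mul_nonneg (sigmaMinCols_nonneg D S) (l2norm_nonneg v))
    (sigmaMinCols_mul_l2norm_le D hv) 2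

lemma sqNorm_gradStep_le (hD : ∀ j, l2norm (fun i => D i j) ≤ 1) {T : Finset (Fin n)} {η : ℝ}
    (hη : 0 ≤ η) (hηT : η * T.card ≤ 1) {v w : Fin n → ℝ} (hv : ∀ j ∉ T, v j = 0)
    (hw : ∀ j ∉ T, w j = 0)
    (hwT : ∀ j ∈ T, w j = v j - η * (Dᵀ *ᵥ (D *ᵥ v)) j) :
    sqNorm w ≤ sqNorm v - η * sqNorm (D *ᵥ v) := by
  set u := Dᵀ *ᵥ (D *ᵥ v)
  have hvu : ∑ j ∈ T, v j * u j = sqNorm (D *ᵥ v) := by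
    rw [Finset.sum_subset T.subset_univ fun j _ hj => by rw [hv j hj, zero_mul]]
    rw [← dotProduct_self_eq_sqNorm, dotProduct_mulVec, ← mulVec_transpose, dotProduct_comm]
    rfl
  have hu : ∑ j ∈ T, u j ^ 2 ≤ T.card * sqNorm (D *ᵥ v) := by
    simpa using Finset.sum_le_card_nsmul T _ _ fun j _ => sq_transpose_mulVec_apply_le D hD _ j
  have hw' : sqNorm w = sqNorm v - 2 * η * ∑ j ∈ T, v j * u j + η ^ 2 * ∑ j ∈ T, u j ^ 2 := by
    rw [sqNorm_eq_sum_of_eq_zero hw, sqNorm_eq_sum_of_eq_zero hv, Finset.mul_sum, Finset.mul_sum,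
      ← Finset.sum_sub_distrib, ← Finset.sum_add_distrib]
    exact Finset.sum_congr rfl fun j hj => by rw [hwT j hj]; ring
  have hquad : η ^ 2 * ∑ j ∈ T, u j ^ 2 ≤ η * sqNorm (D *ᵥ v) :=
    calc η ^ 2 * ∑ j ∈ T, u j ^ 2 ≤ η ^ 2 * (T.card * sqNorm (D *ᵥ v)) := by gcongr
      _ = η * (η * T.card) * sqNorm (D *ᵥ v) := by ring
      _ ≤ η * 1 * sqNorm (D *ᵥ v) := by gcongr; exact sqNorm_nonneg _
      _ = η * sqNorm (D *ᵥ v) := by rw [mul_one]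
  rw [hw', hvu]
  linarith

end Dictionary

section HardThresh

variable {n : ℕ} {θ : ℝ} {w : Fin n → ℝ} {j : Fin n}

lemma hardThresh_apply_of_abs_lt (h : |w j| < θ) : hardThresh θ w j = 0 := if_pos h

lemma hardThresh_apply_of_ne_zero (h : hardThresh θ w j ≠ 0) : hardThresh θ w j = w j := by
  unfold hardThresh at h ⊢
  split_ifs at h ⊢
  · exact absurd rfl h
  · rfl

lemma le_abs_hardThresh_apply (h : hardThresh θ w j ≠ 0) : θ ≤ |hardThresh θ w j| := by
  rw [hardThresh_apply_of_ne_zero h]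
  exact not_lt.1 fun hlt => h (hardThresh_apply_of_abs_lt hlt)

lemma mem_supp {z : Fin n → ℝ} : j ∈ supp z ↔ z j ≠ 0 := by
  simp [supp]

lemma l0norm_eq_sum (z : Fin n → ℝ) : (l0norm z : ℝ) = ∑ j, if z j = 0 then 0 else 1 := by
  simp [l0norm, supp, Finset.card_filter, ite_not]

lemma hardThresh_prox_le (hθ : 0 ≤ θ) (w u : Fin n → ℝ) :
    θ ^ 2 * l0norm (hardThresh θ w) + sqNorm (hardThresh θ w - w) ≤
      θ ^ 2 * l0norm u + sqNorm (u - w) := by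
  simp only [l0norm_eq_sum, sqNorm, Finset.mul_sum, ← Finset.sum_add_distrib, Pi.sub_apply]
  refine Finset.sum_le_sum fun j _ => ?_
  rcases lt_or_ge |w j| θ with hw | hw
  · have hw2 : w j ^ 2 < θ ^ 2 := by
      rw [← sq_abs]
      exact pow_lt_pow_left₀ hw (abs_nonneg _) two_ne_zero
    rw [hardThresh_apply_of_abs_lt hw]
    by_cases hu : u j = 0
    · simp [hu]
    · simp only [hu, if_false, if_true, mul_zero, mul_one, zero_sub, neg_sq]
      nlinarith [sq_nonneg (u j - w j)]
  · have hw2 : θ ^ 2 ≤ w j ^ 2 := by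
      rw [← sq_abs (w j)]
      exact pow_le_pow_left₀ hθ hw 2
    rw [show hardThresh θ w j = w j from if_neg hw.not_gt]
    by_cases hu : u j = 0 <;> by_cases hw0 : w j = 0 <;> simp [hu, hw0] <;>
      nlinarith [sq_nonneg (u j - w j)]

end HardThresh

section PGDStep

variable {d n : ℕ} (D : Matrix (Fin d) (Fin n) ℝ) (x : Fin d → ℝ) (lam : ℝ)

noncomputable def pgdStep (η : ℝ) (z : Fin n → ℝ) : Fin n → ℝ :=
  hardThresh √(lam * η) (z - η • (Dᵀ *ᵥ (D *ᵥ z - x)))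

variable {η : ℝ}

lemma pgdSeq_succ (τ s : ℝ) (z0 : Fin n → ℝ) (t : ℕ) :
    pgdSeq D x lam τ s z0 (t + 1) = pgdStep D x lam (2 / (τ * s)) (pgdSeq D x lam τ s z0 t) := by
  rw [pgdSeq, pgdStep, mul_div_assoc', mul_comm lam]
  rfl

lemma pgdStep_apply_of_ne_zero {z : Fin n → ℝ} {j : Fin n} (h : pgdStep D x lam η z j ≠ 0) :
    pgdStep D x lam η z j = z j - η * (Dᵀ *ᵥ (D *ᵥ z - x)) j :=
  hardThresh_apply_of_ne_zero h

lemma pgdStep_apply_eq_zero (hD : ∀ j, l2norm (fun i => D i j) ≤ 1) (hη : 0 < η)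
    {z : Fin n → ℝ} {j : Fin n} (hz : z j = 0) (hres : η * sqNorm (x - D *ᵥ z) < lam) :
    pgdStep D x lam η z j = 0 := by
  apply hardThresh_apply_of_abs_lt
  rw [Real.lt_sqrt (abs_nonneg _), sq_abs]
  have hgrad := sq_transpose_mulVec_apply_le D hD (D *ᵥ z - x) j
  rw [sqNorm_sub_comm] at hgrad
  calc (z - η • (Dᵀ *ᵥ (D *ᵥ z - x))) j ^ 2 = η ^ 2 * (Dᵀ *ᵥ (D *ᵥ z - x)) j ^ 2 := by
        simp [hz, mul_pow]
    _ ≤ η * (η * sqNorm (x - D *ᵥ z)) := by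
        rw [← mul_assoc, ← sq]
        exact mul_le_mul_of_nonneg_left hgrad (sq_nonneg η)
    _ < η * lam := mul_lt_mul_of_pos_left hres hη
    _ = lam * η := mul_comm _ _

lemma Lobj_nonneg (hlam : 0 ≤ lam) (z : Fin n → ℝ) : 0 ≤ Lobj D x lam z := by
  unfold Lobj
  positivity

lemma sqNorm_sub_mulVec_le_Lobj (hlam : 0 ≤ lam) (z : Fin n → ℝ) :
    sqNorm (x - D *ᵥ z) ≤ Lobj D x lam z := by
  rw [Lobj, l2norm_sq]
  exact le_add_of_nonneg_right (mul_nonneg hlam (Nat.cast_nonneg _))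

lemma Lobj_pgdStep_add_le (hlam : 0 ≤ lam) (hη : 0 < η) (z : Fin n → ℝ) :
    Lobj D x lam (pgdStep D x lam η z) + η⁻¹ * sqNorm (pgdStep D x lam η z - z) ≤
      Lobj D x lam z + sqNorm (D *ᵥ (pgdStep D x lam η z - z)) := by
  set g := Dᵀ *ᵥ (D *ᵥ z - x)
  set z' := pgdStep D x lam η z
  have hprox := hardThresh_prox_le (Real.sqrt_nonneg (lam * η)) (z - η • g) z
  rw [Real.sq_sqrt (mul_nonneg hlam hη.le)] at hprox
  have hstep : z' - (z - η • g) = (z' - z) + η • g := by abel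
  change lam * η * l0norm z' + sqNorm (z' - (z - η • g)) ≤ _ at hprox
  rw [hstep, sub_sub_cancel, sqNorm_add_smul, sqNorm_smul] at hprox
  have hprox' : lam * l0norm z' + η⁻¹ * sqNorm (z' - z) + 2 * (g ⬝ᵥ (z' - z)) ≤
      lam * l0norm z := by
    refine le_of_mul_le_mul_left ?_ hη
    rw [mul_add, mul_add, ← mul_assoc η η⁻¹, mul_inv_cancel₀ hη.ne']
    linarith
  have hexp := sqNorm_sub_mulVec_add D x z (z' - z)
  rw [add_sub_cancel] at hexp
  simp only [Lobj, l2norm_sq, hexp]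
  linarith

lemma Lobj_pgdStep_add_le_of_eq_zero (hD : ∀ j, l2norm (fun i => D i j) ≤ 1) (hlam : 0 ≤ lam)
    (hη : 0 < η) {S : Finset (Fin n)} {z : Fin n → ℝ} (hz : ∀ j ∉ S, z j = 0)
    (hz' : ∀ j ∉ S, pgdStep D x lam η z j = 0) :
    Lobj D x lam (pgdStep D x lam η z) + (η⁻¹ - S.card) * sqNorm (pgdStep D x lam η z - z) ≤
      Lobj D x lam z := by
  have hδ : sqNorm (D *ᵥ (pgdStep D x lam η z - z)) ≤ S.card * _ :=
    sqNorm_mulVec_le_card_mul D hD fun j hj => by simp [hz j hj, hz' j hj]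
  linarith [Lobj_pgdStep_add_le D x lam hlam hη z]

lemma grad_eq_zero_of_tendsto_pgdStep (hη : 0 < η) {z : ℕ → Fin n → ℝ}
    (hz : ∀ t, z (t + 1) = pgdStep D x lam η (z t)) {zhat : Fin n → ℝ}
    (hlim : Tendsto z atTop (𝓝 zhat)) : ∀ j ∈ supp zhat, (Dᵀ *ᵥ (D *ᵥ zhat - x)) j = 0 := by
  intro j hj
  set F : (Fin n → ℝ) → ℝ := fun y => y j - η * (Dᵀ *ᵥ (D *ᵥ y - x)) j
  have hF : Continuous F := by fun_prop
  have hcoord : Tendsto (fun t => z (t + 1) j) atTop (𝓝 (zhat j)) :=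
    tendsto_pi_nhds.1 (hlim.comp (tendsto_add_atTop_nat 1)) j
  have hstep : ∀ᶠ t in atTop, F (z t) = z (t + 1) j := by
    filter_upwards [hcoord.eventually_ne (mem_supp.1 hj)] with t ht
    rw [hz t] at ht ⊢
    exact (pgdStep_apply_of_ne_zero D x lam ht).symm
  have hfix : F zhat = zhat j :=
    tendsto_nhds_unique ((hF.tendsto zhat).comp hlim |>.congr' hstep) hcoord
  simpa [F, hη.ne'] using hfix

end PGDStep

section Support

variable {n : ℕ} {θ : ℝ}

lemma supp_eq_of_sqNorm_sub_lt (hθ : 0 ≤ θ) {a b : Fin n → ℝ}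
    (ha : ∀ j, a j ≠ 0 → θ ≤ |a j|) (hb : ∀ j, b j ≠ 0 → θ ≤ |b j|)
    (hab : sqNorm (b - a) < θ ^ 2) : supp a = supp b := by
  have key : ∀ {u v : Fin n → ℝ}, (∀ j, u j ≠ 0 → θ ≤ |u j|) → sqNorm (v - u) < θ ^ 2 →
      ∀ j, u j ≠ 0 → v j ≠ 0 := by
    intro u v hu huv j huj hvj
    have hθu : θ ^ 2 ≤ u j ^ 2 := by
      rw [← sq_abs (u j)]
      exact pow_le_pow_left₀ hθ (hu j huj) 2
    have := sq_le_sqNorm (v - u) j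
    simp only [Pi.sub_apply, hvj, zero_sub, neg_sq] at this
    linarith
  ext j
  simp only [mem_supp]
  exact ⟨key ha hab j, key hb (by rwa [sqNorm_sub_comm]) j⟩

lemma exists_eventually_supp_eq (hθ : 0 ≤ θ) {z : ℕ → Fin n → ℝ}
    (hbig : ∀ᶠ t in atTop, ∀ j, z t j ≠ 0 → θ ≤ |z t j|)
    (hsmall : ∀ᶠ t in atTop, sqNorm (z (t + 1) - z t) < θ ^ 2) :
    ∃ T, ∀ᶠ t in atTop, supp (z t) = T := by
  obtain ⟨t0, ht0⟩ := eventually_atTop.1 (hbig.and hsmall)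
  refine ⟨supp (z t0), eventually_atTop.2 ⟨t0, fun t ht => ?_⟩⟩
  induction t, ht using Nat.le_induction with
  | base => rfl
  | succ t ht ih =>
    rw [← ih]
    exact (supp_eq_of_sqNorm_sub_lt hθ (ht0 t ht).1 (ht0 (t + 1) (by omega)).1 (ht0 t ht).2).symm

end Support

section Convergence

variable {d n : ℕ} {D : Matrix (Fin d) (Fin n) ℝ} {x : Fin d → ℝ} {lam η : ℝ}
  {z : ℕ → Fin n → ℝ}

lemma pgd_eq_zero_and_Lobj_le (hD : ∀ j, l2norm (fun i => D i j) ≤ 1) (hlam : 0 ≤ lam)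
    (hη : 0 < η) (hz : ∀ t, z (t + 1) = pgdStep D x lam η (z t))
    (hηS : η * (supp (z 0)).card ≤ 1) (hηL : η * Lobj D x lam (z 0) < lam) (t : ℕ) :
    (∀ j ∉ supp (z 0), z t j = 0) ∧ Lobj D x lam (z t) ≤ Lobj D x lam (z 0) := by
  induction t with
  | zero => exact ⟨fun j hj => by simpa [mem_supp] using hj, le_rfl⟩
  | succ t ih =>
    obtain ⟨hsupp, hL⟩ := ih
    have hres : η * sqNorm (x - D *ᵥ z t) < lam :=
      (mul_le_mul_of_nonneg_left ((sqNorm_sub_mulVec_le_Lobj D x lam hlam _).trans hL)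
        hη.le).trans_lt hηL
    have hsupp' : ∀ j ∉ supp (z 0), pgdStep D x lam η (z t) j = 0 := fun j hj =>
      pgdStep_apply_eq_zero D x lam hD hη (hsupp j hj) hres
    have hcoef : 0 ≤ η⁻¹ - (supp (z 0)).card := by
      rw [sub_nonneg, ← one_div, le_div_iff₀' hη]
      exact hηS
    have hdesc := Lobj_pgdStep_add_le_of_eq_zero D x lam hD hlam hη hsupp hsupp'
    rw [hz t]
    exact ⟨hsupp', by nlinarith [sqNorm_nonneg (pgdStep D x lam η (z t) - z t)]⟩

lemma pgd_tendsto_sqNorm_sub (hD : ∀ j, l2norm (fun i => D i j) ≤ 1) (hlam : 0 ≤ lam)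
    (hη : 0 < η) (hz : ∀ t, z (t + 1) = pgdStep D x lam η (z t))
    (hηS : η * (supp (z 0)).card < 1) (hηL : η * Lobj D x lam (z 0) < lam) :
    Tendsto (fun t => sqNorm (z (t + 1) - z t)) atTop (𝓝 0) := by
  have hinv := pgd_eq_zero_and_Lobj_le hD hlam hη hz hηS.le hηL
  have hcoef : 0 < η⁻¹ - (supp (z 0)).card := by
    rw [sub_pos, ← one_div, lt_div_iff₀' hη]
    exact hηS
  refine tendsto_zero_of_add_mul_le_self hcoef (fun t => Lobj_nonneg D x lam hlam (z t))
    (fun t => sqNorm_nonneg _) fun t => ?_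
  have hsupp' : ∀ j ∉ supp (z 0), pgdStep D x lam η (z t) j = 0 := by
    simpa [hz t] using (hinv (t + 1)).1
  simpa [hz t] using Lobj_pgdStep_add_le_of_eq_zero D x lam hD hlam hη (hinv t).1 hsupp'

lemma pgd_exists_eventually_supp_eq (hlam : 0 < lam) (hη : 0 < η)
    (hz : ∀ t, z (t + 1) = pgdStep D x lam η (z t))
    (hδ : Tendsto (fun t => sqNorm (z (t + 1) - z t)) atTop (𝓝 0)) :
    ∃ T, ∀ᶠ t in atTop, supp (z t) = T := by
  have hθ : 0 < √(lam * η) := Real.sqrt_pos.2 (mul_pos hlam hη)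
  refine exists_eventually_supp_eq hθ.le (eventually_atTop.2 ⟨1, fun t ht j hj => ?_⟩)
    (hδ.eventually (gt_mem_nhds (pow_pos hθ 2)))
  obtain ⟨t, rfl⟩ := Nat.exists_eq_add_of_le' ht
  rw [hz t] at hj ⊢
  exact le_abs_hardThresh_apply hj

lemma pgd_sqNorm_sub_succ_le (hD : ∀ j, l2norm (fun i => D i j) ≤ 1) (hη : 0 ≤ η)
    (hz : ∀ t, z (t + 1) = pgdStep D x lam η (z t)) {S T : Finset (Fin n)} (hTS : T ⊆ S)
    (hηS : η * S.card ≤ 1) {t : ℕ} (h0 : supp (z t) = T) (h1 : supp (z (t + 1)) = T)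
    (h2 : supp (z (t + 2)) = T) :
    sqNorm (z (t + 2) - z (t + 1)) ≤ (1 - η * sigmaMinCols D S ^ 2) * sqNorm (z (t + 1) - z t) := by
  have hzero : ∀ {k}, supp (z k) = T → ∀ j ∉ T, z k j = 0 := fun hk j hj => by
    simpa [← hk, mem_supp] using hj
  have hstep : ∀ {k}, supp (z (k + 1)) = T → ∀ j ∈ T,
      z (k + 1) j = z k j - η * (Dᵀ *ᵥ (D *ᵥ z k - x)) j := fun {k} hk j hj => by
    rw [← hk, mem_supp, hz k] at hj
    rw [hz k]
    exact pgdStep_apply_of_ne_zero D x lam hj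
  have hv : ∀ j ∉ T, (z (t + 1) - z t) j = 0 := fun j hj => by
    simp [hzero h0 j hj, hzero h1 j hj]
  have hηT : η * T.card ≤ 1 :=
    le_trans (mul_le_mul_of_nonneg_left (by exact_mod_cast Finset.card_le_card hTS) hη) hηS
  have hgrad := sqNorm_gradStep_le D hD hη hηT hv (w := z (t + 2) - z (t + 1))
    (fun j hj => by simp [hzero h1 j hj, hzero h2 j hj]) fun j hj => by
      have hdiff := congrFun (transpose_mulVec_mulVec_sub_sub D x (z t) (z (t + 1))) j
      simp only [Pi.sub_apply] at hdiff ⊢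
      rw [hstep h2 j hj, hstep h1 j hj, ← hdiff]
      ring
  have hσ := sigmaMinCols_sq_mul_sqNorm_le D (S := S) fun j hj => hv j fun hjT => hj (hTS hjT)
  nlinarith [mul_le_mul_of_nonneg_left hσ hη]

theorem pgd_exists_tendsto_grad_eq_zero (hD : ∀ j, l2norm (fun i => D i j) ≤ 1) (hlam : 0 < lam)
    (hη : 0 < η) (hz : ∀ t, z (t + 1) = pgdStep D x lam η (z t))
    (hηS : η * (supp (z 0)).card < 1) (hηL : η * Lobj D x lam (z 0) < lam)
    (hσ : 0 < sigmaMinCols D (supp (z 0))) :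
    ∃ zhat, Tendsto z atTop (𝓝 zhat) ∧ ∀ j ∈ supp zhat, (Dᵀ *ᵥ (D *ᵥ zhat - x)) j = 0 := by
  have hinv := pgd_eq_zero_and_Lobj_le hD hlam.le hη hz hηS.le hηL
  obtain ⟨T, hT⟩ := pgd_exists_eventually_supp_eq hlam hη hz
    (pgd_tendsto_sqNorm_sub hD hlam.le hη hz hηS hηL)
  obtain ⟨t0, ht0⟩ := eventually_atTop.1 hT
  have hTS : T ⊆ supp (z 0) := fun j hj => by
    rw [← ht0 t0 le_rfl, mem_supp] at hj
    exact by_contra fun h => hj ((hinv t0).1 j h)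
  have hcontr := hT.and ((tendsto_add_atTop_nat 1).eventually hT |>.and
    ((tendsto_add_atTop_nat 2).eventually hT)) |>.mono fun t ⟨h0, h1, h2⟩ =>
      pgd_sqNorm_sub_succ_le hD hη.le hz hTS hηS.le h0 h1 h2
  obtain ⟨zhat, hlim⟩ := cauchySeq_tendsto_of_complete <|
    cauchySeq_of_sqNorm_sub_le (by nlinarith [pow_pos hσ 2]) hcontr
  exact ⟨zhat, hlim, grad_eq_zero_of_tendsto_pgdStep D x lam hη hz hlim⟩

end Convergence

theorem stmt5_general {d n : ℕ} (D : Matrix (Fin d) (Fin n) ℝ) (x : Fin d → ℝ)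
    (lam τ s : ℝ) (z0 : Fin n → ℝ)
    (hD : ∀ j, l2norm (fun i => D i j) ≤ 1)
    (hlam : 0 < lam) (hτ : 1 < τ)
    (hz0 : l2norm (x - D.mulVec z0) ≤ 1)
    (hs : s > max (2 * ((supp z0).card : ℝ))
                  (2 * (1 + lam * ((supp z0).card : ℝ)) / (lam * τ)))
    (hσ : 0 < sigmaMinCols D (supp z0)) :
    ∃ zhat : Fin n → ℝ,
      Filter.Tendsto (pgdSeq D x lam τ s z0) Filter.atTop (nhds zhat) ∧
      ∀ j ∈ supp zhat, (D.transpose.mulVec (D.mulVec zhat - x)) j = 0 := by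
  set S := supp z0
  have hs1 : 2 * (S.card : ℝ) < s := (le_max_left _ _).trans_lt hs
  have hs2 : 2 * (1 + lam * S.card) < s * (lam * τ) :=
    (div_lt_iff₀ (by positivity)).1 ((le_max_right _ _).trans_lt hs)
  have hτs : 0 < τ * s := mul_pos (by linarith) (lt_of_le_of_lt (by positivity) hs1)
  have hL0 : Lobj D x lam z0 ≤ 1 + lam * S.card := by
    rw [Lobj, l2norm_sq, l0norm]
    linarith [sqNorm_le_one_of_l2norm_le_one hz0]
  have hηS : 2 / (τ * s) * S.card < 1 := by
    rw [div_mul_eq_mul_div, div_lt_one hτs]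
    nlinarith
  have hηL : 2 / (τ * s) * Lobj D x lam z0 < lam := by
    rw [div_mul_eq_mul_div, div_lt_iff₀ hτs]
    nlinarith
  exact pgd_exists_tendsto_grad_eq_zero hD hlam (by positivity) (pgdSeq_succ D x lam τ s z0)
    hηS hηL hσ

theorem stmt5 {d n : ℕ} (D : Matrix (Fin d) (Fin n) ℝ) (x : Fin d → ℝ)
    (lam τ s : ℝ) (z0 : Fin n → ℝ)
    (hx : l2norm x ≤ 1) (hD : ∀ j, l2norm (fun i => D i j) ≤ 1)
    (hlam : 0 < lam) (hτ : 1 < τ)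
    (hz0 : l2norm (x - D.mulVec z0) ≤ 1)
    (hs : s > max (2 * ((supp z0).card : ℝ))
                  (2 * (1 + lam * ((supp z0).card : ℝ)) / (lam * τ)))
    (hσ : 0 < sigmaMinCols D (supp z0)) :
    ∃ zhat : Fin n → ℝ,
      Filter.Tendsto (pgdSeq D x lam τ s z0) Filter.atTop (nhds zhat) ∧
      ∀ j ∈ supp zhat, (D.transpose.mulVec (D.mulVec zhat - x)) j = 0 :=
  stmt5_general D x lam τ s z0 hD hlam hτ hz0 hs hσ
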